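/- Let c ∈ ℝ^n and suppose S(A,b) ≠ ∅. Write c⁺_j = max(c_j,0), c⁻_j = min(c_j,0). Suppose x̄ minimizes Σ_j c⁻_j x_j over S(A,b) and x* minimizes Σ_j c⁺_j x_j over S(A,b). Define y_j = x̄_j if c_j ≤ 0 and y_j = x*_j if c_j > 0. Then y is feasible and minimizes Σ_j c_j x_j over S(A,b), provided x* = X(e*) for some selection e* with e*(i) ∈ J̄_i. -/

import Mathlib

/-!
Every feasible point lies below `x̄` (this is what makes `x̄` the maximum solution), and since
`TL a` is monotone, every `y` with `x ≤ y ≤ x̄` for some feasible `x` is feasible again. The point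
`y` agrees with `x̄` or `x*` coordinatewise, so `x* ≤ y ≤ x̄` and `y` is feasible. Optimality
follows from `c = c⁻ + c⁺`: the objective of `y` splits as `c⁻ · x̄ + c⁺ · x*`, and each summand is
minimal over the solution set.
-/

/-- The Łukasiewicz t-norm. -/
noncomputable def TL (a x : ℝ) : ℝ := max (a + x - 1) 0

/-- The candidate maximum solution `x̄` (empty min = 1, handled by the `if`). -/
noncomputable def xbar {m n : ℕ} [NeZero m] (A : Fin m → Fin n → ℝ) (b : Fin m → ℝ)
    (j : Fin n) : ℝ :=
  Finset.univ.inf' Finset.univ_nonempty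
    (fun i => if b i ≤ A i j then b i + 1 - A i j else 1)

/-- `x` is a feasible solution of the system `A φ x = b`. -/
def Feasible {m n : ℕ} [NeZero m] [NeZero n] (A : Fin m → Fin n → ℝ) (b : Fin m → ℝ)
    (x : Fin n → ℝ) : Prop :=
  (∀ j, x j ∈ Set.Icc (0:ℝ) 1) ∧
  ∀ i, Finset.univ.sup' Finset.univ_nonempty (fun j => TL (A i j) (x j)) = b i

/-- The candidate minimal point `X(e)` associated to a selection `e`
(empty max = 0, handled by the `if`). -/
noncomputable def Xe {m n : ℕ} [NeZero m] (A : Fin m → Fin n → ℝ) (b : Fin m → ℝ)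
    (e : Fin m → Fin n) (j : Fin n) : ℝ :=
  Finset.univ.sup' Finset.univ_nonempty
    (fun i => if e i = j ∧ b i ≠ 0 then b i + 1 - A i j else 0)

/-- `e` is a valid selection: `e i ∈ J̄ᵢ` for every `i`. -/
def ValidSel {m n : ℕ} [NeZero m] (A : Fin m → Fin n → ℝ) (b : Fin m → ℝ)
    (e : Fin m → Fin n) : Prop :=
  ∀ i, b i ≤ A i (e i) ∧ TL (A i (e i)) (xbar A b (e i)) = b i

open Finset

theorem TL_nonneg (a x : ℝ) : 0 ≤ TL a x := le_max_right _ _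

theorem TL_le_iff {a x b : ℝ} : TL a x ≤ b ↔ a + x - 1 ≤ b ∧ 0 ≤ b := max_le_iff

theorem TL_mono {a x y : ℝ} (h : x ≤ y) : TL a x ≤ TL a y :=
  max_le_max_right 0 (by linarith)

section Feasible

variable {m n : ℕ} [NeZero m] {A : Fin m → Fin n → ℝ} {b : Fin m → ℝ}

theorem xbar_le_one (A : Fin m → Fin n → ℝ) (b : Fin m → ℝ) (j : Fin n) : xbar A b j ≤ 1 :=
  (inf'_le _ (mem_univ 0)).trans (by split_ifs <;> linarith)

theorem TL_xbar_le {i : Fin m} (hb : 0 ≤ b i) (j : Fin n) : TL (A i j) (xbar A b j) ≤ b i := by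
  have hle : xbar A b j ≤ if b i ≤ A i j then b i + 1 - A i j else 1 := inf'_le _ (mem_univ i)
  refine TL_le_iff.2 ⟨?_, hb⟩
  split_ifs at hle with h
  · linarith
  · linarith [xbar_le_one A b j]

variable [NeZero n] {x y : Fin n → ℝ}

theorem Feasible.TL_le (hx : Feasible A b x) (i : Fin m) (j : Fin n) :
    TL (A i j) (x j) ≤ b i :=
  hx.2 i ▸ le_sup' (fun j => TL (A i j) (x j)) (mem_univ j)

theorem Feasible.rhs_nonneg (hx : Feasible A b x) (i : Fin m) : 0 ≤ b i :=
  (TL_le_iff.1 (hx.TL_le i 0)).2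

theorem Feasible.le_xbar (hx : Feasible A b x) (j : Fin n) : x j ≤ xbar A b j := by
  refine le_inf' _ _ fun i _ => ?_
  split_ifs
  · linarith [(TL_le_iff.1 (hx.TL_le i j)).1]
  · exact (hx.1 j).2

theorem Feasible.of_le_of_le_xbar (hx : Feasible A b x) (hxy : x ≤ y) (hy : y ≤ xbar A b) :
    Feasible A b y := by
  refine ⟨fun j => ⟨(hx.1 j).1.trans (hxy j), (hy j).trans (xbar_le_one A b j)⟩, fun i => ?_⟩
  apply le_antisymm
  · exact sup'_le _ _ fun j _ => (TL_mono (hy j)).trans (TL_xbar_le (hx.rhs_nonneg i) j)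
  · calc b i = univ.sup' univ_nonempty (fun j => TL (A i j) (x j)) := (hx.2 i).symm
      _ ≤ _ := sup'_mono_fun fun j _ => TL_mono (hxy j)

end Feasible

theorem mul_ite_eq_min_mul_add_max_mul {R : Type*} [Semiring R] [LinearOrder R] (c u v : R) :
    c * (if c ≤ 0 then u else v) = min c 0 * u + max c 0 * v := by
  split_ifs with h
  · simp [min_eq_left h, max_eq_right h]
  · simp [min_eq_right (le_of_not_ge h), max_eq_left (le_of_not_ge h)]

theorem stmt_16_general (m n : ℕ) [NeZero m] [NeZero n] (A : Fin m → Fin n → ℝ) (b : Fin m → ℝ)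
    (c : Fin n → ℝ)
    (hxbarmin : ∀ x, Feasible A b x →
      ∑ j, min (c j) 0 * xbar A b j ≤ ∑ j, min (c j) 0 * x j)
    (xstar : Fin n → ℝ) (hxstar : Feasible A b xstar)
    (hxstarmin : ∀ x, Feasible A b x →
      ∑ j, max (c j) 0 * xstar j ≤ ∑ j, max (c j) 0 * x j) :
    Feasible A b (fun j => if c j ≤ 0 then xbar A b j else xstar j) ∧
      ∀ x, Feasible A b x →
        ∑ j, c j * (if c j ≤ 0 then xbar A b j else xstar j) ≤ ∑ j, c j * x j := by
  refine ⟨hxstar.of_le_of_le_xbar (fun j => ?_) (fun j => ?_), fun x hx => ?_⟩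
  · split_ifs
    exacts [hxstar.le_xbar j, le_rfl]
  · split_ifs
    exacts [le_rfl, hxstar.le_xbar j]
  calc ∑ j, c j * (if c j ≤ 0 then xbar A b j else xstar j)
      = ∑ j, min (c j) 0 * xbar A b j + ∑ j, max (c j) 0 * xstar j := by
        simp only [mul_ite_eq_min_mul_add_max_mul, sum_add_distrib]
    _ ≤ ∑ j, min (c j) 0 * x j + ∑ j, max (c j) 0 * x j :=
        add_le_add (hxbarmin x hx) (hxstarmin x hx)
    _ = ∑ j, c j * x j := by
        rw [← sum_add_distrib]
        exact sum_congr rfl fun j _ => by rw [← add_mul, min_add_max, add_zero]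

theorem stmt_16 (m n : ℕ) [NeZero m] [NeZero n] (A : Fin m → Fin n → ℝ) (b : Fin m → ℝ)
    (hA : ∀ i j, A i j ∈ Set.Icc (0:ℝ) 1) (hb : ∀ i, b i ∈ Set.Icc (0:ℝ) 1)
    (c : Fin n → ℝ) (hS : ∃ x, Feasible A b x)
    (hxbarmin : ∀ x, Feasible A b x →
      ∑ j, min (c j) 0 * xbar A b j ≤ ∑ j, min (c j) 0 * x j)
    (xstar : Fin n → ℝ) (hxstar : Feasible A b xstar)
    (hxstarmin : ∀ x, Feasible A b x →
      ∑ j, max (c j) 0 * xstar j ≤ ∑ j, max (c j) 0 * x j)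
    (estar : Fin m → Fin n) (hestar : ValidSel A b estar) (hxe : xstar = Xe A b estar) :
    Feasible A b (fun j => if c j ≤ 0 then xbar A b j else xstar j) ∧
      ∀ x, Feasible A b x →
        ∑ j, c j * (if c j ≤ 0 then xbar A b j else xstar j) ≤ ∑ j, c j * x j :=
  stmt_16_general m n A b c hxbarmin xstar hxstar hxstarmin
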